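/- Let X be a zigzag poset, ι : X' ↪ X the inclusion of the alternating subposet, and F a sheaf of vector spaces on X. Then the induced map in sheaf cohomology H^k(ι) : H^k(X, F) → H^k(X', ι*F) is an isomorphism for all k ≥ 0. -/

import Mathlib

open CategoryTheory

/-! Zigzag posets.  A zigzag poset is a finite poset whose Hasse diagram is a path
`x_0 — x_1 — ... — x_n` with arbitrarily oriented edges.  We encode the orientation
of the edge between `x_l` and `x_{l+1}` by `o l : Bool` (`true` means `x_l < x_{l+1}`),
and `x_i ≤ x_j` iff all the edges between them point from `x_i` towards `x_j`. -/

/-- The order relation of the zigzag poset with edge orientations `o`. -/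
def zigzagLE (o : ℕ → Bool) (i j : ℕ) : Prop :=
  (i ≤ j ∧ ∀ l, i ≤ l → l < j → o l = true) ∨
  (j ≤ i ∧ ∀ l, j ≤ l → l < i → o l = false)

theorem zigzagLE_refl (o : ℕ → Bool) (i : ℕ) : zigzagLE o i i :=
  Or.inl ⟨le_rfl, fun _ h1 h2 => absurd (lt_of_le_of_lt h1 h2) (lt_irrefl _)⟩

theorem zigzagLE_trans (o : ℕ → Bool) (i j l : ℕ)
    (h1 : zigzagLE o i j) (h2 : zigzagLE o j l) : zigzagLE o i l := by
  rcases h1 with ⟨hij, hup1⟩ | ⟨hji, hdn1⟩ <;> rcases h2 with ⟨hjl, hup2⟩ | ⟨hlj, hdn2⟩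
  · refine Or.inl ⟨le_trans hij hjl, fun m hm1 hm2 => ?_⟩
    rcases Nat.lt_or_ge m j with h | h
    · exact hup1 m hm1 h
    · exact hup2 m h hm2
  · rcases le_or_gt i l with h | h
    · exact Or.inl ⟨h, fun m hm1 hm2 => hup1 m hm1 (lt_of_lt_of_le hm2 hlj)⟩
    · exact Or.inr ⟨le_of_lt h, fun m hm1 hm2 => hdn2 m hm1 (lt_of_lt_of_le hm2 hij)⟩
  · rcases le_or_gt i l with h | h
    · exact Or.inl ⟨h, fun m hm1 hm2 => hup2 m (le_trans hji hm1) hm2⟩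
    · exact Or.inr ⟨le_of_lt h, fun m hm1 hm2 => hdn1 m (le_trans hjl hm1) hm2⟩
  · refine Or.inr ⟨le_trans hlj hji, fun m hm1 hm2 => ?_⟩
    rcases Nat.lt_or_ge m j with h | h
    · exact hdn2 m hm1 h
    · exact hdn1 m h hm2

theorem zigzagLE_antisymm (o : ℕ → Bool) (i j : ℕ)
    (h1 : zigzagLE o i j) (h2 : zigzagLE o j i) : i = j := by
  rcases h1 with ⟨hij, hup1⟩ | ⟨hji, hdn1⟩ <;>
    rcases h2 with ⟨hji', hup2⟩ | ⟨hij', hdn2⟩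
  · omega
  · rcases Nat.lt_or_ge i j with h | h
    · have ht := hup1 i le_rfl h
      have hf := hdn2 i le_rfl h
      simp [ht] at hf
    · omega
  · rcases Nat.lt_or_ge j i with h | h
    · have ht := hup2 j le_rfl h
      have hf := hdn1 j le_rfl h
      simp [ht] at hf
    · omega
  · omega

/-- The zigzag poset on `{x_0, ..., x_n}` with edge orientations `o`. -/
def Zigzag (n : ℕ) (o : ℕ → Bool) : Type := Fin (n + 1)

instance (n : ℕ) (o : ℕ → Bool) : PartialOrder (Zigzag n o) where
  le i j := zigzagLE o (Fin.val i) (Fin.val j)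
  le_refl i := zigzagLE_refl o _
  le_trans i j l := zigzagLE_trans o _ _ _
  le_antisymm i j h1 h2 := Fin.ext (zigzagLE_antisymm o _ _ h1 h2)

/-- The index of a point of the zigzag poset. -/
def Zigzag.idx {n : ℕ} {o : ℕ → Bool} (x : Zigzag n o) : ℕ := Fin.val x

/-- The alternating subposet `X' ⊆ X`: all minimal elements together with the
internal maximal elements (the maximal elements flanked by minimal elements on
both sides); this is the alternating sequence of minimal and internal maximal
elements of the zigzag. -/
def altSet (n : ℕ) (o : ℕ → Bool) : Set (Zigzag n o) :=
  {x | IsMin x ∨ (IsMax x ∧ (∃ y : Zigzag n o, IsMin y ∧ y.idx < x.idx) ∧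
    (∃ y : Zigzag n o, IsMin y ∧ x.idx < y.idx))}

/-- The alternating subposet, with the induced order. -/
def AltSub (n : ℕ) (o : ℕ → Bool) : Type := {x : Zigzag n o // x ∈ altSet n o}

instance (n : ℕ) (o : ℕ → Bool) : PartialOrder (AltSub n o) :=
  inferInstanceAs (PartialOrder {x : Zigzag n o // x ∈ altSet n o})

/-- The inclusion `ι : X' ↪ X` is order preserving. -/
lemma altIncl_monotone (n : ℕ) (o : ℕ → Bool) :
    Monotone (fun x : AltSub n o => (x.val : Zigzag n o)) := fun _ _ h => h

/-- The restriction (pullback) functor `ι*` of sheaves along the inclusion of the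
alternating subposet. -/
noncomputable def restrictAlt (n : ℕ) (o : ℕ → Bool) (C : Type*) [Category C] :
    (Zigzag n o ⥤ C) ⥤ (AltSub n o ⥤ C) :=
  (Functor.whiskeringLeft (AltSub n o) (Zigzag n o) C).obj (altIncl_monotone n o).functor

open CategoryTheory.Limits

/-! The inclusion `ι : X' ↪ X` has a right adjoint `r`: every `x` has a greatest element of `X'`
below it, namely `x` itself if `x ∈ X'`, and otherwise the minimum below `x`, which is unique
because two minima below `x` would flank it and make it an internal maximum.
Being a left adjoint, `ι` is initial, so `Γ(X, -) ≅ Γ(X', ι* -)`; and `ι*` is exact with the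
exact left adjoint `r*`, so it preserves injectives. Thus `ι*` carries an injective resolution
of `F` to one of `ι*F` with isomorphic global sections. -/

namespace CategoryTheory

variable {C D E : Type*} [Category C] [Category D] [Category E] [Abelian C] [Abelian D]
  [Abelian E]

/-- Dual of `Functor.mapProjectiveResolution`. -/
noncomputable def Functor.mapInjectiveResolution (G : C ⥤ D) [G.Additive]
    [G.PreservesInjectiveObjects] [G.PreservesHomology] {Z : C} (I : InjectiveResolution Z) :
    InjectiveResolution (G.obj Z) where
  cocomplex := (G.mapHomologicalComplex _).obj I.cocomplex
  injective n := G.injective_obj_of_injective (I.injective n)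
  ι := (HomologicalComplex.singleMapHomologicalComplex _ _ _).inv.app _ ≫
    (G.mapHomologicalComplex _).map I.ι
  quasiIso := inferInstance

noncomputable def Functor.rightDerivedObjIsoOfIsoComp {F₁ : C ⥤ E} {F₂ : D ⥤ E} {G : C ⥤ D}
    [F₁.Additive] [F₂.Additive] [G.Additive] [G.PreservesInjectiveObjects]
    [G.PreservesHomology] [HasInjectiveResolutions C] [HasInjectiveResolutions D]
    (e : F₁ ≅ G ⋙ F₂) (X : C) (n : ℕ) :
    (F₁.rightDerived n).obj X ≅ (F₂.rightDerived n).obj (G.obj X) :=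
  let I := injectiveResolution X
  I.isoRightDerivedObj F₁ n ≪≫
    (HomologicalComplex.homologyFunctor E _ n).mapIso
      ((NatIso.mapHomologicalComplex e _).app I.cocomplex) ≪≫
    ((G.mapInjectiveResolution I).isoRightDerivedObj F₂ n).symm

noncomputable def Functor.limRightDerivedObjIsoOfAdjunction {J J' : Type*} [Category J]
    [Category J'] [HasLimitsOfShape J C] [HasLimitsOfShape J' C] [(lim : (J ⥤ C) ⥤ C).Additive] [(lim : (J' ⥤ C) ⥤ C).Additive]
    [HasInjectiveResolutions (J ⥤ C)] [HasInjectiveResolutions (J' ⥤ C)]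
    {L : J' ⥤ J} {R : J ⥤ J'} (adj : L ⊣ R) (F : J ⥤ C) (n : ℕ) :
    ((lim : (J ⥤ C) ⥤ C).rightDerived n).obj F ≅
      ((lim : (J' ⥤ C) ⥤ C).rightDerived n).obj (L ⋙ F) :=
  have := Functor.initial_of_adjunction adj
  have := Functor.preservesInjectiveObjects_of_adjunction_of_preservesMonomorphisms
    (adj.whiskerLeft C)
  Functor.rightDerivedObjIsoOfIsoComp (Functor.Initial.limIso L).symm F n

end CategoryTheory

namespace zigzagLE

variable {o : ℕ → Bool} {i j : ℕ}

theorem up (h : zigzagLE o i j) (hij : i < j) {l : ℕ} (hil : i ≤ l) (hlj : l < j) :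
    o l = true := by
  rcases h with ⟨-, h⟩ | ⟨hji, -⟩
  · exact h l hil hlj
  · omega

theorem down (h : zigzagLE o i j) (hji : j < i) {l : ℕ} (hjl : j ≤ l) (hli : l < i) :
    o l = false := by
  rcases h with ⟨hij, -⟩ | ⟨-, h⟩
  · omega
  · exact h l hjl hli

end zigzagLE

namespace Zigzag

variable {n : ℕ} {o : ℕ → Bool}

theorem le_iff {x y : Zigzag n o} : x ≤ y ↔ zigzagLE o x.idx y.idx := Iff.rfl

theorem ext {x y : Zigzag n o} (h : x.idx = y.idx) : x = y := Fin.ext h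

theorem idx_lt (x : Zigzag n o) : x.idx < n + 1 := Fin.isLt x

theorem edge_right_of_isMin {a : Zigzag n o} (ha : IsMin a) (han : a.idx < n) :
    o a.idx = true := by
  by_contra hfalse
  obtain ⟨b, hb⟩ : ∃ b : Zigzag n o, b.idx = a.idx + 1 := ⟨⟨a.idx + 1, by omega⟩, rfl⟩
  have hba : zigzagLE o b.idx a.idx := Or.inr ⟨by omega, fun l h₁ h₂ => by
    obtain rfl : l = a.idx := by omega
    simpa using hfalse⟩
  have := congrArg idx (ha.eq_of_le hba)
  omega

theorem edge_left_of_isMin {a : Zigzag n o} (ha : IsMin a) (ha0 : 0 < a.idx) :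
    o (a.idx - 1) = false := by
  by_contra htrue
  obtain ⟨b, hb⟩ : ∃ b : Zigzag n o, b.idx = a.idx - 1 :=
    ⟨⟨a.idx - 1, by have := a.idx_lt; omega⟩, rfl⟩
  have hba : zigzagLE o b.idx a.idx := Or.inl ⟨by omega, fun l h₁ h₂ => by
    obtain rfl : l = a.idx - 1 := by omega
    simpa using htrue⟩
  have := congrArg idx (ha.eq_of_le hba)
  omega

theorem isMax_of_edges {x : Zigzag n o} (hl : 0 < x.idx → o (x.idx - 1) = true)
    (hr : x.idx < n → o x.idx = false) : IsMax x := by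
  intro y hxy
  rcases lt_trichotomy x.idx y.idx with hlt | heq | hgt
  · have := (le_iff.mp hxy).up hlt le_rfl hlt
    simp [hr (by have := y.idx_lt; omega)] at this
  · exact (ext heq).symm.le
  · have := (le_iff.mp hxy).down hgt (Nat.le_sub_one_of_lt hgt) (by omega)
    simp [hl (by omega)] at this

theorem exists_isMin_le (x : Zigzag n o) : ∃ a, a ≤ x ∧ IsMin a := by
  have : Finite (Zigzag n o) := inferInstanceAs (Finite (Fin (n + 1)))
  obtain ⟨a, hax, ha⟩ :=
    exists_minimal_le_of_wellFoundedLT (fun _ : Zigzag n o => True) x trivial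
  exact ⟨a, hax, minimal_true.mp ha⟩

theorem mem_altSet_of_isMin_le {a b x : Zigzag n o} (ha : IsMin a) (hb : IsMin b)
    (hax : a ≤ x) (hbx : b ≤ x) (hab : a.idx < b.idx) : x ∈ altSet n o := by
  have hxa : a.idx < x.idx := by
    by_contra! hxa
    have := (le_iff.mp hbx).down (by omega) hxa hab
    simp [edge_right_of_isMin ha (by have := b.idx_lt; omega)] at this
  have hxb : x.idx < b.idx := by
    by_contra! hbx
    have := (le_iff.mp hax).up hxa (l := b.idx - 1) (by omega) (by omega)
    simp [edge_left_of_isMin hb (by omega)] at this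
  refine Or.inr ⟨isMax_of_edges (fun _ => (le_iff.mp hax).up hxa (by omega) (by omega))
    (fun _ => (le_iff.mp hbx).down hxb le_rfl hxb), ⟨a, ha, hxa⟩, ⟨b, hb, hxb⟩⟩

theorem exists_isGreatest_altSub_le (x : Zigzag n o) :
    ∃ m : AltSub n o, IsGreatest {y : AltSub n o | y.val ≤ x} m := by
  by_cases hx : x ∈ altSet n o
  · exact ⟨⟨x, hx⟩, le_refl x, fun _ hy => hy⟩
  obtain ⟨a, hax, ha⟩ := exists_isMin_le x
  refine ⟨⟨a, Or.inl ha⟩, hax, fun y (hyx : y.val ≤ x) => ?_⟩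
  rcases y.2 with hy | ⟨hy, -, -⟩
  · rcases lt_trichotomy y.val.idx a.idx with h | h | h
    · exact absurd (mem_altSet_of_isMin_le hy ha hyx hax h) hx
    · exact (ext h).le
    · exact absurd (mem_altSet_of_isMin_le ha hy hax hyx h) hx
  · exact absurd (hy.eq_of_ge hyx ▸ y.2) hx

end Zigzag

theorem AltSub.exists_galoisConnection_val (n : ℕ) (o : ℕ → Bool) :
    ∃ r : Zigzag n o → AltSub n o, GaloisConnection (fun y : AltSub n o => y.val) r := by
  choose r hr using Zigzag.exists_isGreatest_altSub_le (n := n) (o := o)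
  exact ⟨r, fun y x => ⟨fun h => (hr x).2 h, fun h => le_trans h (hr x).1⟩⟩

/-- Let `X` be a zigzag poset, `ι : X' ↪ X` the inclusion of the
alternating subposet, and `F` a sheaf of vector spaces on `X`.  Then the induced map
in sheaf cohomology (right derived functors of the limit functor)
`H^j(X, F) → H^j(X', ι*F)` is an isomorphism for all `j ≥ 0`. -/
theorem cohomology_zigzag_alt_iso (k : Type) [Field k] (n : ℕ) (o : ℕ → Bool)
    [(lim : (Zigzag n o ⥤ ModuleCat.{0} k) ⥤ ModuleCat.{0} k).Additive]
    [(lim : (AltSub n o ⥤ ModuleCat.{0} k) ⥤ ModuleCat.{0} k).Additive]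
    [HasInjectiveResolutions (Zigzag n o ⥤ ModuleCat.{0} k)]
    [HasInjectiveResolutions (AltSub n o ⥤ ModuleCat.{0} k)]
    (F : Zigzag n o ⥤ ModuleCat.{0} k) (j : ℕ) :
    Nonempty ((((lim : (Zigzag n o ⥤ ModuleCat.{0} k) ⥤ ModuleCat.{0} k).rightDerived j).obj F) ≅
      (((lim : (AltSub n o ⥤ ModuleCat.{0} k) ⥤ ModuleCat.{0} k).rightDerived j).obj
        ((restrictAlt n o (ModuleCat.{0} k)).obj F))) := by
  obtain ⟨r, gc⟩ := AltSub.exists_galoisConnection_val n o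
  exact ⟨Functor.limRightDerivedObjIsoOfAdjunction gc.adjunction F j⟩
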